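/- Assume k₁ ≤ m. Let λ ∈ ℂ with λ ∉ a(𝕋), set p = p(λ), and assume the p roots ξ_1, …, ξ_p of b_λ in the open unit disk are pairwise distinct. For α ∈ ℂ^p let v_α ∈ ℓ² be the sequence (v_α)_i = ∑_{t=1}^{p} α_t ξ_t^{i−1}. Then λ is an eigenvalue of A = T(a) + E if and only if there exists α ∈ ℂ^p, α ≠ 0, such that ((A − λI) v_α)_k = 0 for k = 1, …, m; in that case v_α ≠ 0 and A v_α = λ v_α. -/

import Mathlib

open scoped ENNReal

noncomputable section

/-- The polynomial `b_λ(z) = z^m (a(z) - λ) = ∑_{k=0}^{m+n} a_{k-m} z^k - λ z^m`. -/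
def bpoly (m n : ℕ) (a : ℤ → ℂ) (lam : ℂ) : Polynomial ℂ :=
  (∑ k ∈ Finset.range (m + n + 1), Polynomial.C (a ((k : ℤ) - (m : ℤ))) * Polynomial.X ^ k)
    - Polynomial.C lam * Polynomial.X ^ m

/-- `p(λ)`: the number of roots of `b_λ` in the open unit disk, counted with multiplicity. -/
def rootCount (m n : ℕ) (a : ℤ → ℂ) (lam : ℂ) : ℕ :=
  Multiset.card ((bpoly m n a lam).roots.filter fun z => ‖z‖ < 1)

/-- The value `a(z) = ∑_{k=-m}^{n} a_k z^k` of the Laurent polynomial. -/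
def aval (m n : ℕ) (a : ℤ → ℂ) (z : ℂ) : ℂ :=
  ∑ k ∈ Finset.Icc (-(m : ℤ)) (n : ℤ), a k * z ^ k

/-- The image `a(𝕋)` of the unit circle under the Laurent polynomial `a`. -/
def aCircle (m n : ℕ) (a : ℤ → ℂ) : Set ℂ :=
  {w : ℂ | ∃ z : ℂ, ‖z‖ = 1 ∧ aval m n a z = w}

/-- The Hilbert space `ℓ²` of square-summable complex sequences (0-indexed). -/
abbrev ell2 := lp (fun _ : ℕ => ℂ) 2

/-!
For `i ≥ m ≥ k₁` row `i` of `E` vanishes, so row `s + m` of `(A - λ) v = 0` reads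
`∑ₖ a_{k-m} v_{s+k} = λ v_{s+m}`, i.e. `b_λ(S) v = 0` for the left shift `S`. A solution of
`(S - μ) w = 0` is geometric with ratio `μ`, so it cannot tend to `0` when `‖μ‖ ≥ 1`; peeling
off the linear factors of `b_λ` with roots outside the open disk shows that every `v ∈ ℓ²` with
`b_λ(S) v = 0` satisfies `∏ₜ (S - ξₜ) v = 0`. As the `ξₜ` are distinct, a Vandermonde system
matches the first `p` entries of `v` with some `v_α`, and a monic recurrence of order `p`
determines its solution from them, so `v = v_α`. Conversely `b_λ(S) v_α = 0`, so only the first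
`m` rows of `(A - λ) v_α = 0` remain to be checked.
-/

open Polynomial Filter Topology

def seqShift (R : Type*) [Semiring R] : Module.End R (ℕ → R) :=
  LinearMap.funLeft R R (· + 1)

section CommRing

variable {R : Type*} [CommRing R]

theorem seqShift_pow_apply (k : ℕ) (v : ℕ → R) (s : ℕ) : (seqShift R ^ k) v s = v (s + k) := by
  induction k generalizing s with
  | zero => rfl
  | succ k ih =>
    rw [pow_succ', Module.End.mul_apply]
    exact (ih (s + 1)).trans (congrArg v (add_right_comm s 1 k))

theorem aeval_seqShift_apply (P : R[X]) (v : ℕ → R) (s : ℕ) :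
    aeval (seqShift R) P v s = ∑ k ∈ Finset.range (P.natDegree + 1), P.coeff k * v (s + k) := by
  simp only [aeval_eq_sum_range, LinearMap.coe_sum, Finset.sum_apply, LinearMap.smul_apply,
    Pi.smul_apply, seqShift_pow_apply, smul_eq_mul]

theorem aeval_seqShift_geom (P : R[X]) (z : R) :
    aeval (seqShift R) P (fun i => z ^ i) = P.eval z • fun i => z ^ i := by
  ext s
  rw [aeval_seqShift_apply, eval_eq_sum_range, Pi.smul_apply, smul_eq_mul, Finset.sum_mul]
  exact Finset.sum_congr rfl fun k _ => by ring

theorem aeval_seqShift_sum_geom_eq_zero {ι : Type*} [Fintype ι] {P : R[X]} {ξ : ι → R}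
    (hξ : ∀ t, P.IsRoot (ξ t)) (α : ι → R) :
    aeval (seqShift R) P (fun i => ∑ t, α t * ξ t ^ i) = 0 := by
  have h : (fun i => ∑ t, α t * ξ t ^ i) = ∑ t, α t • fun i => ξ t ^ i := by
    ext i; simp
  simp [h, aeval_seqShift_geom, (hξ _).eq_zero]

theorem eq_zero_of_aeval_seqShift_eq_zero {P : R[X]} (hP : P.Monic) {u : ℕ → R}
    (h : aeval (seqShift R) P u = 0) (h0 : ∀ i < P.natDegree, u i = 0) : u = 0 := by
  suffices h' : ∀ i, u i = 0 from funext h'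
  intro i
  induction i using Nat.strong_induction_on with
  | _ i ih =>
    obtain hi | hi := lt_or_ge i P.natDegree
    · exact h0 i hi
    obtain ⟨s, rfl⟩ := Nat.exists_eq_add_of_le' hi
    have hs := congrFun h s
    have hlow : ∀ k ∈ Finset.range P.natDegree, P.coeff k * u (s + k) = 0 := fun k hk => by
      rw [ih _ (by have := Finset.mem_range.mp hk; omega), mul_zero]
    rwa [aeval_seqShift_apply, Finset.sum_range_succ, hP.coeff_natDegree, one_mul,
      Finset.sum_eq_zero hlow, zero_add] at hs

end CommRing

theorem exists_eq_sum_geom_of_aeval_seqShift_prod_eq_zero {K : Type*} [Field K] {p : ℕ}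
    {ξ : Fin p → K} (hξ : Function.Injective ξ) {v : ℕ → K}
    (h : aeval (seqShift K) (∏ t, (X - C (ξ t))) v = 0) :
    ∃ α : Fin p → K, v = fun i => ∑ t, α t * ξ t ^ i := by
  have hunit : IsUnit (Matrix.vandermonde ξ) := (Matrix.isUnit_iff_isUnit_det _).mpr
    (Matrix.det_vandermonde_ne_zero_iff.mpr hξ).isUnit
  obtain ⟨α, hα⟩ := Matrix.vecMul_surjective_iff_isUnit.mpr hunit fun i => v i
  refine ⟨α, sub_eq_zero.mp (eq_zero_of_aeval_seqShift_eq_zero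
    (monic_prod_of_monic Finset.univ _ fun t _ => monic_X_sub_C (ξ t)) ?_ fun i hi => ?_)⟩
  · rw [map_sub, h, aeval_seqShift_sum_geom_eq_zero (fun t => ?_), sub_zero]
    rw [IsRoot.def, eval_prod]
    exact Finset.prod_eq_zero (Finset.mem_univ t) (by simp)
  · rw [natDegree_finsetProd_X_sub_C_eq_card, Finset.card_univ, Fintype.card_fin] at hi
    have hαi := congrFun hα ⟨i, hi⟩
    simp only [Matrix.vecMul, dotProduct, Matrix.vandermonde_apply] at hαi
    rw [Pi.sub_apply, ← hαi, sub_self]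

section Normed

variable {𝕜 : Type*} [NormedField 𝕜]

theorem tendsto_aeval_seqShift (P : 𝕜[X]) {v : ℕ → 𝕜} (hv : Tendsto v atTop (𝓝 0)) :
    Tendsto (aeval (seqShift 𝕜) P v) atTop (𝓝 0) := by
  simp_rw [funext (aeval_seqShift_apply P v)]
  simpa using tendsto_finsetSum _ fun k _ =>
    (hv.comp (tendsto_add_atTop_nat k)).const_mul (P.coeff k)

theorem eq_zero_of_seqShift_eq_smul {μ : 𝕜} (hμ : 1 ≤ ‖μ‖) {w : ℕ → 𝕜}
    (hw : Tendsto w atTop (𝓝 0)) (h : seqShift 𝕜 w = μ • w) : w = 0 := by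
  have hgeom : ∀ s, w s = μ ^ s * w 0 := fun s => by
    induction s with
    | zero => simp
    | succ s ih => rw [pow_succ', mul_assoc, ← ih]; exact congrFun h s
  have hle : ∀ s, ‖w 0‖ ≤ ‖w s‖ := fun s => by
    rw [hgeom s, norm_mul, norm_pow]
    exact le_mul_of_one_le_left (norm_nonneg _) (one_le_pow₀ hμ)
  have h0 : w 0 = 0 := norm_le_zero_iff.mp <|
    ge_of_tendsto' (tendsto_norm_zero.comp hw) hle
  ext s
  simp [hgeom s, h0]

theorem eq_zero_of_aeval_seqShift_prod_eq_zero {M : Multiset 𝕜} (hM : ∀ μ ∈ M, 1 ≤ ‖μ‖)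
    {w : ℕ → 𝕜} (hw : Tendsto w atTop (𝓝 0))
    (h : aeval (seqShift 𝕜) (M.map (X - C ·)).prod w = 0) : w = 0 := by
  induction M using Multiset.induction_on generalizing w with
  | empty => simpa using h
  | cons μ M ih =>
    rw [Multiset.map_cons, Multiset.prod_cons, mul_comm, map_mul, Module.End.mul_apply] at h
    have hμw := ih (fun ν hν => hM ν (Multiset.mem_cons_of_mem hν))
      (tendsto_aeval_seqShift _ hw) h
    refine eq_zero_of_seqShift_eq_smul (hM μ (Multiset.mem_cons_self μ M)) hw ?_
    simpa [sub_eq_zero, Module.algebraMap_end_apply] using hμw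

theorem exists_eq_sum_geom_of_aeval_seqShift_eq_zero [IsAlgClosed 𝕜] {P : 𝕜[X]} (hP : P ≠ 0)
    {p : ℕ} {ξ : Fin p → 𝕜} (hξ : Function.Injective ξ)
    (hroots : P.roots.filter (fun z => ‖z‖ < 1) = Multiset.map ξ Finset.univ.val)
    {v : ℕ → 𝕜} (hv : Tendsto v atTop (𝓝 0)) (h : aeval (seqShift 𝕜) P v = 0) :
    ∃ α : Fin p → 𝕜, v = fun i => ∑ t, α t * ξ t ^ i := by
  set U := P.roots.filter (fun z => ¬ ‖z‖ < 1)
  have hfac : P = C P.leadingCoeff * (U.map (X - C ·)).prod * ∏ t, (X - C (ξ t)) := by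
    conv_lhs => rw [(IsAlgClosed.splits P).eq_prod_roots,
      ← Multiset.filter_add_not (fun z => ‖z‖ < 1) P.roots]
    rw [Multiset.map_add, Multiset.prod_add, hroots, Multiset.map_map, mul_assoc,
      mul_comm (Multiset.prod _)]
    rfl
  refine exists_eq_sum_geom_of_aeval_seqShift_prod_eq_zero hξ <|
    eq_zero_of_aeval_seqShift_prod_eq_zero (M := U)
      (fun μ hμ => not_lt.mp (Multiset.mem_filter.mp hμ).2) (tendsto_aeval_seqShift _ hv) ?_
  rw [hfac, map_mul, map_mul, aeval_C, Module.End.mul_apply, Module.End.mul_apply,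
    Module.algebraMap_end_apply] at h
  exact (smul_eq_zero.mp h).resolve_left (leadingCoeff_ne_zero.mpr hP)

end Normed

theorem lp.tendsto_atTop_zero {E : Type*} [NormedAddCommGroup E] {p : ℝ≥0∞} (hp : 0 < p.toReal)
    (f : lp (fun _ : ℕ => E) p) : Tendsto (⇑f) atTop (𝓝 0) := by
  have h := ((lp.memℓp f).summable hp).tendsto_atTop_zero.rpow_const (p := p.toReal⁻¹)
    (Or.inr (by positivity))
  rw [Real.zero_rpow (by positivity)] at h
  refine tendsto_zero_iff_norm_tendsto_zero.mpr (h.congr fun i => ?_)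
  rw [← Real.rpow_mul (norm_nonneg _), mul_inv_cancel₀ hp.ne', Real.rpow_one]

theorem memℓp_geom {𝕜 : Type*} [NormedField 𝕜] {p : ℝ≥0∞} (hp : 0 < p.toReal) {z : 𝕜}
    (hz : ‖z‖ < 1) : Memℓp (fun i : ℕ => z ^ i) p := by
  refine memℓp_gen ((summable_geometric_of_lt_one (by positivity)
    (Real.rpow_lt_one (norm_nonneg z) hz hp)).congr fun i => ?_)
  rw [norm_pow, ← Real.rpow_natCast, ← Real.rpow_mul (norm_nonneg z), mul_comm,
    Real.rpow_mul (norm_nonneg z), Real.rpow_natCast]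

theorem memℓp_sum_geom {𝕜 ι : Type*} [NormedField 𝕜] [Fintype ι] {p : ℝ≥0∞}
    (hp : 0 < p.toReal) {ξ : ι → 𝕜} (hξ : ∀ t, ‖ξ t‖ < 1) (α : ι → 𝕜) :
    Memℓp (fun i : ℕ => ∑ t, α t * ξ t ^ i) p := by
  simpa only [Finset.sum_fn] using
    Memℓp.finsetSum Finset.univ fun t _ => (memℓp_geom hp (hξ t)).const_mul (α t)

theorem lp.ext_continuousLinearMap_single_one {α 𝕜 F : Type*} [DecidableEq α] [NormedField 𝕜]
    [AddCommMonoid F] [Module 𝕜 F] [TopologicalSpace F] [T2Space F] {p : ℝ≥0∞} [Fact (1 ≤ p)]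
    (hp : p ≠ ⊤) {f g : lp (fun _ : α => 𝕜) p →L[𝕜] F}
    (h : ∀ j, f (lp.single p j 1) = g (lp.single p j 1)) : f = g :=
  lp.ext_continuousLinearMap hp fun j => ContinuousLinearMap.ext fun x => by
    have hx : lp.single p j x = x • (lp.single p j 1 : lp (fun _ : α => 𝕜) p) := by
      rw [← lp.single_smul, smul_eq_mul, mul_one]
    simp [hx, h j]

theorem ContinuousLinearMap.lp_apply_eq_zero_of_single_one {α β 𝕜 : Type*} [DecidableEq α]
    [NormedField 𝕜] {p q : ℝ≥0∞} [Fact (1 ≤ p)] [Fact (1 ≤ q)] (hp : p ≠ ⊤)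
    {L : lp (fun _ : α => 𝕜) p →L[𝕜] lp (fun _ : β => 𝕜) q} {i : β}
    (h : ∀ j, L (lp.single p j 1) i = 0) (v : lp (fun _ : α => 𝕜) p) : L v i = 0 := by
  have hL : (lp.evalCLM 𝕜 _ q i).comp L = 0 :=
    lp.ext_continuousLinearMap_single_one hp fun j => h j
  exact congrArg (fun f => f v) hL

variable {m n : ℕ} {a : ℤ → ℂ} {lam : ℂ}

theorem bpoly_coeff_zero (hm : 1 ≤ m) : (bpoly m n a lam).coeff 0 = a (-m) := by
  simp [bpoly, Finset.sum_ite_eq, (by omega : m ≠ 0).symm]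

theorem bpoly_ne_zero (hm : 1 ≤ m) (ham : a (-m) ≠ 0) : bpoly m n a lam ≠ 0 :=
  fun h => ham ((bpoly_coeff_zero hm).symm.trans (by rw [h, coeff_zero]))

theorem aeval_seqShift_bpoly_apply (v : ℕ → ℂ) (s : ℕ) :
    aeval (seqShift ℂ) (bpoly m n a lam) v s =
      ∑ k ∈ Finset.range (m + n + 1), a (k - m) * v (s + k) - lam * v (s + m) := by
  simp [bpoly, Module.algebraMap_end_apply, seqShift_pow_apply]

theorem sum_range_toeplitz_row (ha : ∀ k < -(m : ℤ), a k = 0) (v : ℕ → ℂ) (s : ℕ) :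
    ∑ j ∈ Finset.range (s + m + n + 1), a (j - (s + m : ℕ)) * v j =
      ∑ k ∈ Finset.range (m + n + 1), a (k - m) * v (s + k) := by
  rw [add_assoc s, add_assoc s, Finset.sum_range_add, Finset.sum_eq_zero, zero_add]
  · refine Finset.sum_congr rfl fun k _ => ?_
    congr 2
    push_cast; ring
  · intro j hj
    rw [ha _ (by have := Finset.mem_range.mp hj; push_cast; omega), zero_mul]

theorem toeplitz_apply_add_eq (ha : ∀ k < -(m : ℤ), a k = 0) {T : ell2 →L[ℂ] ell2}
    (hT : ∀ (v : ell2) (i : ℕ),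
      (T v) i = ∑ j ∈ Finset.range (i + n + 1), a ((j : ℤ) - (i : ℤ)) * v j)
    (v : ell2) (s : ℕ) :
    T v (s + m) = aeval (seqShift ℂ) (bpoly m n a lam) v s + lam * v (s + m) := by
  rw [hT, sum_range_toeplitz_row ha, aeval_seqShift_bpoly_apply, sub_add_cancel]

theorem toeplitz_add_apply_eq_smul_iff (ha : ∀ k < -(m : ℤ), a k = 0) {T E : ell2 →L[ℂ] ell2}
    (hT : ∀ (v : ell2) (i : ℕ),
      (T v) i = ∑ j ∈ Finset.range (i + n + 1), a ((j : ℤ) - (i : ℤ)) * v j)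
    (hE : ∀ i, m ≤ i → ∀ j, (E (lp.single 2 j 1)) i = 0) (v : ell2) :
    (T + E) v = lam • v ↔
      (∀ k < m, (T + E) v k = lam * v k) ∧ aeval (seqShift ℂ) (bpoly m n a lam) v = 0 := by
  have hrow (s : ℕ) :
      (T + E) v (s + m) = aeval (seqShift ℂ) (bpoly m n a lam) v s + lam * v (s + m) := by
    rw [add_apply, lp.coeFn_add, Pi.add_apply, toeplitz_apply_add_eq ha hT,
      E.lp_apply_eq_zero_of_single_one ENNReal.ofNat_ne_top (hE _ (Nat.le_add_left m s)) v,
      add_zero]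
  simp only [lp.ext_iff, lp.coeFn_smul, funext_iff, Pi.smul_apply, smul_eq_mul]
  refine ⟨fun h => ⟨fun k _ => h k, fun s => ?_⟩, fun ⟨hhead, htail⟩ i => ?_⟩
  · exact add_eq_right.mp ((hrow s).symm.trans (h (s + m)))
  · obtain hi | hi := lt_or_ge i m
    · exact hhead i hi
    · obtain ⟨s, rfl⟩ := Nat.exists_eq_add_of_le' hi
      rw [hrow, htail, Pi.zero_apply, zero_add]

theorem stmt_9_general (m n : ℕ) (hm : 1 ≤ m) (a : ℤ → ℂ)
    (ham : a (-(m : ℤ)) ≠ 0)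
    (hsupp : ∀ k : ℤ, (k < -(m : ℤ) ∨ (n : ℤ) < k) → a k = 0)
    (k₁ k₂ : ℕ) (hk₁m : k₁ ≤ m)
    (T E A : ell2 →L[ℂ] ell2)
    (hT : ∀ (v : ell2) (i : ℕ),
      (T v) i = ∑ j ∈ Finset.range (i + n + 1), a ((j : ℤ) - (i : ℤ)) * v j)
    (hE : ∀ i j : ℕ, (k₁ ≤ i ∨ k₂ ≤ j) → (E (lp.single 2 j 1)) i = 0)
    (hA : A = T + E)
    (lam : ℂ)
    (ξ : Fin (rootCount m n a lam) → ℂ) (hinj : Function.Injective ξ)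
    (hroots : ((bpoly m n a lam).roots.filter fun z => ‖z‖ < 1) =
      Multiset.map ξ Finset.univ.val) :
    ∃ hmem : ∀ α : Fin (rootCount m n a lam) → ℂ,
        (fun i : ℕ => ∑ t, α t * ξ t ^ i) ∈ lp (fun _ : ℕ => ℂ) 2,
      ((∃ v : ell2, v ≠ 0 ∧ A v = lam • v) ↔
        ∃ α : Fin (rootCount m n a lam) → ℂ, α ≠ 0 ∧ ∀ k : ℕ, k < m →
          (A ⟨fun i : ℕ => ∑ t, α t * ξ t ^ i, hmem α⟩) k = lam * ∑ t, α t * ξ t ^ k) ∧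
      (∀ α : Fin (rootCount m n a lam) → ℂ, α ≠ 0 →
        (∀ k : ℕ, k < m →
          (A ⟨fun i : ℕ => ∑ t, α t * ξ t ^ i, hmem α⟩) k = lam * ∑ t, α t * ξ t ^ k) →
        (⟨fun i : ℕ => ∑ t, α t * ξ t ^ i, hmem α⟩ : ell2) ≠ 0 ∧
          A ⟨fun i : ℕ => ∑ t, α t * ξ t ^ i, hmem α⟩ =
            lam • (⟨fun i : ℕ => ∑ t, α t * ξ t ^ i, hmem α⟩ : ell2)) := by
  subst hA
  set b := bpoly m n a lam
  have hb : b ≠ 0 := bpoly_ne_zero hm ham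
  have hξ : ∀ t, b.IsRoot (ξ t) ∧ ‖ξ t‖ < 1 := fun t => by
    have h : ξ t ∈ b.roots.filter fun z => ‖z‖ < 1 :=
      hroots ▸ Multiset.mem_map_of_mem ξ (Finset.mem_univ_val t)
    rwa [Multiset.mem_filter, mem_roots hb] at h
  have hmem (α : Fin (rootCount m n a lam) → ℂ) :
      (fun i : ℕ => ∑ t, α t * ξ t ^ i) ∈ lp (fun _ : ℕ => ℂ) 2 :=
    memℓp_sum_geom (by norm_num) (fun t => (hξ t).2) α
  have heig := toeplitz_add_apply_eq_smul_iff (lam := lam) (fun k hk => hsupp k (Or.inl hk)) hT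
    fun i hi j => hE i j (Or.inl (hk₁m.trans hi))
  have heigvec (α : Fin (rootCount m n a lam) → ℂ) (hα : α ≠ 0)
      (hhead : ∀ k < m, (T + E) ⟨_, hmem α⟩ k = lam * ∑ t, α t * ξ t ^ k) :
      (⟨_, hmem α⟩ : ell2) ≠ 0 ∧ (T + E) ⟨_, hmem α⟩ = lam • (⟨_, hmem α⟩ : ell2) :=
    ⟨fun h0 => hα (Matrix.eq_zero_of_forall_pow_sum_mul_pow_eq_zero hinj fun i =>
        congrArg (fun v : ell2 => v i) h0),
      (heig _).mpr ⟨hhead, aeval_seqShift_sum_geom_eq_zero (fun t => (hξ t).1) α⟩⟩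
  refine ⟨hmem, ⟨fun ⟨v, hv0, hv⟩ => ?_, fun ⟨α, hα, hhead⟩ => ⟨_, heigvec α hα hhead⟩⟩, heigvec⟩
  obtain ⟨α, hα⟩ := exists_eq_sum_geom_of_aeval_seqShift_eq_zero hb hinj hroots
    (lp.tendsto_atTop_zero (by norm_num) v) ((heig v).mp hv).2
  obtain rfl : v = ⟨_, hmem α⟩ := lp.ext hα
  refine ⟨α, ?_, ((heig _).mp hv).1⟩
  rintro rfl
  exact hv0 (lp.ext (funext fun i => by simp))

/-- assume `k₁ ≤ m`, `λ ∉ a(𝕋)`, and that the `p = p(λ)` roots `ξ_t` of `b_λ`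
in the open unit disk are pairwise distinct.  Each Vandermonde combination
`v_α = (∑_t α_t ξ_t^{i-1})_i` lies in `ℓ²`, and `λ` is an eigenvalue of `A = T(a) + E` iff
there is `α ≠ 0` such that the first `m` entries of `(A − λI) v_α` vanish; in that case
`v_α ≠ 0` and `A v_α = λ v_α`. -/
theorem stmt_9 (m n : ℕ) (hm : 1 ≤ m) (hn : 1 ≤ n) (a : ℤ → ℂ)
    (ham : a (-(m : ℤ)) ≠ 0) (han : a (n : ℤ) ≠ 0)
    (hsupp : ∀ k : ℤ, (k < -(m : ℤ) ∨ (n : ℤ) < k) → a k = 0)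
    (k₁ k₂ : ℕ) (hk₁ : 1 ≤ k₁) (hk₂ : 1 ≤ k₂) (hk₁m : k₁ ≤ m)
    (T E A : ell2 →L[ℂ] ell2)
    (hT : ∀ (v : ell2) (i : ℕ),
      (T v) i = ∑ j ∈ Finset.range (i + n + 1), a ((j : ℤ) - (i : ℤ)) * v j)
    (hE : ∀ i j : ℕ, (k₁ ≤ i ∨ k₂ ≤ j) → (E (lp.single 2 j 1)) i = 0)
    (hA : A = T + E)
    (lam : ℂ) (hlam : lam ∉ aCircle m n a)
    (ξ : Fin (rootCount m n a lam) → ℂ) (hinj : Function.Injective ξ)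
    (hroots : ((bpoly m n a lam).roots.filter fun z => ‖z‖ < 1) =
      Multiset.map ξ Finset.univ.val) :
    ∃ hmem : ∀ α : Fin (rootCount m n a lam) → ℂ,
        (fun i : ℕ => ∑ t, α t * ξ t ^ i) ∈ lp (fun _ : ℕ => ℂ) 2,
      ((∃ v : ell2, v ≠ 0 ∧ A v = lam • v) ↔
        ∃ α : Fin (rootCount m n a lam) → ℂ, α ≠ 0 ∧ ∀ k : ℕ, k < m →
          (A ⟨fun i : ℕ => ∑ t, α t * ξ t ^ i, hmem α⟩) k = lam * ∑ t, α t * ξ t ^ k) ∧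
      (∀ α : Fin (rootCount m n a lam) → ℂ, α ≠ 0 →
        (∀ k : ℕ, k < m →
          (A ⟨fun i : ℕ => ∑ t, α t * ξ t ^ i, hmem α⟩) k = lam * ∑ t, α t * ξ t ^ k) →
        (⟨fun i : ℕ => ∑ t, α t * ξ t ^ i, hmem α⟩ : ell2) ≠ 0 ∧
          A ⟨fun i : ℕ => ∑ t, α t * ξ t ^ i, hmem α⟩ =
            lam • (⟨fun i : ℕ => ∑ t, α t * ξ t ^ i, hmem α⟩ : ell2)) :=
  stmt_9_general m n hm a ham hsupp k₁ k₂ hk₁m T E A hT hE hA lam ξ hinj hroots
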